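/- arXiv:1411.2793 — 2 statements merged into one kernel-verified Lean document; each statement's English description precedes it below -/
import Mathlib

section
/- Let U ⊆ ℝⁿ be open and convex, let g : U → ℝ be twice continuously differentiable with Hess g(x) negative definite for every x ∈ U, and let m ∈ U. Define F : U → ℝ by F(x) := ⟨m − x, ∇g(x)⟩ + g(x). Then: (i) ∇F(x) = Hess g(x)·(m − x) for all x ∈ U; (ii) for every x ∈ U with x ≠ m, the function t ↦ F(m + t(x − m)) is strictly increasing on [0, 1]; and (iii) F(m) < F(x) for all x ∈ U with x ≠ m, i.e. F attains a strict global minimum on U at m. -/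
/-- The Hessian matrix of second partial derivatives of `f` at `x`. -/
noncomputable def Hess {n : ℕ} (f : (Fin n → ℝ) → ℝ) (x : Fin n → ℝ) :
    Matrix (Fin n) (Fin n) ℝ :=
  fun i j => fderiv ℝ (fun y => fderiv ℝ f y (Pi.single j 1)) x (Pi.single i 1)

/-- The quadratic form `vᵀ M v` of a matrix. -/
def QuadForm {n : ℕ} (M : Matrix (Fin n) (Fin n) ℝ) (v : Fin n → ℝ) : ℝ :=
  ∑ i, ∑ j, v i * M i j * v j

/-- A real matrix is negative definite if `vᵀ M v < 0` for all nonzero `v`. -/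
def NegDefMat {n : ℕ} (M : Matrix (Fin n) (Fin n) ℝ) : Prop :=
  ∀ v : Fin n → ℝ, v ≠ 0 → QuadForm M v < 0


lemma eval_eq_sum {n : ℕ} (S : (Fin n → ℝ) →L[ℝ] ℝ) (w : Fin n → ℝ) :
    S w = ∑ k, w k * S (Pi.single k 1) := by
  have h := LinearMap.pi_apply_eq_sum_univ (S : (Fin n → ℝ) →ₗ[ℝ] ℝ) w
  simp only [ContinuousLinearMap.coe_coe] at h
  rw [h]
  refine Finset.sum_congr rfl fun k _ => ?_
  rw [smul_eq_mul]
  congr 2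
  ext j; simp [Pi.single_apply, eq_comm]


section
variable {n : ℕ} {U : Set (Fin n → ℝ)} {g : (Fin n → ℝ) → ℝ} {y : Fin n → ℝ}

lemma hG_of (hU : IsOpen U) (hg : ContDiffOn ℝ 2 g U) (hy : y ∈ U) :
    HasFDerivAt (fderiv ℝ g) (fderiv ℝ (fderiv ℝ g) y) y := by
  have hgy : ContDiffAt ℝ 2 g y := hg.contDiffAt (hU.mem_nhds hy)
  have h2 : ContDiffAt ℝ 1 (fderiv ℝ g) y := hgy.fderiv_right (by norm_num)
  exact (h2.differentiableAt (by norm_num)).hasFDerivAt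

lemma hess_eq (hU : IsOpen U) (hg : ContDiffOn ℝ 2 g U) (hy : y ∈ U) (i j : Fin n) :
    Hess g y i j = fderiv ℝ (fderiv ℝ g) y (Pi.single i 1) (Pi.single j 1) := by
  have hG := hG_of hU hg hy
  have h := (ContinuousLinearMap.apply ℝ ℝ (Pi.single j (1:ℝ))).hasFDerivAt.comp y hG
  have h' : HasFDerivAt (fun x => fderiv ℝ g x (Pi.single j 1))
      (((ContinuousLinearMap.apply ℝ ℝ) (Pi.single j 1)).comp (fderiv ℝ (fderiv ℝ g) y)) y := h
  have : Hess g y i j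
      = fderiv ℝ (fun x => fderiv ℝ g x (Pi.single j 1)) y (Pi.single i 1) := rfl
  rw [this, h'.fderiv]
  rfl

lemma bilin_eval (hU : IsOpen U) (hg : ContDiffOn ℝ 2 g U) (hy : y ∈ U) (v : Fin n → ℝ) :
    fderiv ℝ (fderiv ℝ g) y v v
      = ∑ i, ∑ j, v i * Hess g y i j * v j := by
  set T := fderiv ℝ (fderiv ℝ g) y with hT
  have h1 : T v v = ∑ j, v j * (T.flip (Pi.single j 1)) v := eval_eq_sum (T v) v
  rw [h1]
  rw [Finset.sum_comm]
  refine Finset.sum_congr rfl fun j _ => ?_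
  rw [eval_eq_sum (T.flip (Pi.single j 1)) v, Finset.mul_sum]
  refine Finset.sum_congr rfl fun i _ => ?_
  rw [hess_eq hU hg hy]
  simp only [ContinuousLinearMap.flip_apply]
  ring
end

lemma hasFDerivF {n : ℕ} {U : Set (Fin n → ℝ)} {g : (Fin n → ℝ) → ℝ} {y : Fin n → ℝ}
    (hU : IsOpen U) (hg : ContDiffOn ℝ 2 g U) (hy : y ∈ U) (m : Fin n → ℝ)
    {F : (Fin n → ℝ) → ℝ} (hF : ∀ x, F x = fderiv ℝ g x (m - x) + g x) :
    HasFDerivAt F ((fderiv ℝ (fderiv ℝ g) y).flip (m - y)) y := by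
  have hG := hG_of hU hg hy
  have hgy : ContDiffAt ℝ 2 g y := hg.contDiffAt (hU.mem_nhds hy)
  have hgd : HasFDerivAt g (fderiv ℝ g y) y :=
    (hgy.differentiableAt (by norm_num)).hasFDerivAt
  have hu : HasFDerivAt (fun x : Fin n → ℝ => m - x)
      (-(ContinuousLinearMap.id ℝ (Fin n → ℝ))) y := by
    simpa using (hasFDerivAt_const m y).sub (hasFDerivAt_id (𝕜 := ℝ) y)
  have h1 := (hG.clm_apply hu).add hgd
  have hFeq : F = fun x => fderiv ℝ g x (m - x) + g x := funext hF
  rw [hFeq]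
  refine h1.congr_fderiv ?_
  ext v
  simp

theorem stmt_5 (n : ℕ) (U : Set (Fin n → ℝ)) (hU : IsOpen U) (hUconv : Convex ℝ U)
    (g : (Fin n → ℝ) → ℝ) (hg : ContDiffOn ℝ 2 g U)
    (hneg : ∀ x ∈ U, NegDefMat (Hess g x))
    (m : Fin n → ℝ) (hm : m ∈ U)
    (F : (Fin n → ℝ) → ℝ)
    (hF : ∀ x, F x = fderiv ℝ g x (m - x) + g x) :
    (∀ x ∈ U, ∀ j : Fin n,
        fderiv ℝ F x (Pi.single j 1) = (Hess g x).mulVec (m - x) j) ∧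
    (∀ x ∈ U, x ≠ m →
        StrictMonoOn (fun t : ℝ => F (m + t • (x - m))) (Set.Icc (0 : ℝ) 1)) ∧
    (∀ x ∈ U, x ≠ m → F m < F x) := by
  have keyd : ∀ y ∈ U, HasFDerivAt F ((fderiv ℝ (fderiv ℝ g) y).flip (m - y)) y :=
    fun y hy => hasFDerivF hU hg hy m hF
  have part1 : ∀ x ∈ U, ∀ j : Fin n,
      fderiv ℝ F x (Pi.single j 1) = (Hess g x).mulVec (m - x) j := by
    intro x hx j
    rw [(keyd x hx).fderiv]
    have h0 : ((fderiv ℝ (fderiv ℝ g) x).flip (m - x)) (Pi.single j 1)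
        = (fderiv ℝ (fderiv ℝ g) x) (Pi.single j 1) (m - x) := rfl
    rw [h0, eval_eq_sum]
    simp only [Matrix.mulVec, dotProduct]
    refine Finset.sum_congr rfl fun k _ => ?_
    rw [hess_eq hU hg hx]
    ring
  have part2 : ∀ x ∈ U, x ≠ m →
      StrictMonoOn (fun t : ℝ => F (m + t • (x - m))) (Set.Icc (0 : ℝ) 1) := by
    intro x hx hxm
    set γ : ℝ → (Fin n → ℝ) := fun t => m + t • (x - m) with hγ
    have hmem : ∀ t ∈ Set.Icc (0:ℝ) 1, γ t ∈ U := by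
      intro t ht
      have hγt : γ t = (1 - t) • m + t • x := by rw [hγ]; module
      rw [hγt]
      exact hUconv hm hx (by linarith [ht.2]) ht.1 (by ring)
    have hderiv : ∀ t ∈ Set.Icc (0:ℝ) 1, HasDerivAt (fun t => F (γ t))
        (((fderiv ℝ (fderiv ℝ g) (γ t)).flip (m - γ t)) (x - m)) t := by
      intro t ht
      have hγd : HasDerivAt γ (x - m) t := by
        have h1 : HasDerivAt (fun t : ℝ => t • (x - m)) ((1:ℝ) • (x - m)) t :=
          (hasDerivAt_id t).smul_const (x - m)
        simpa only [one_smul] using h1.const_add m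
      exact (keyd (γ t) (hmem t ht)).comp_hasDerivAt t hγd
    apply strictMonoOn_of_deriv_pos (convex_Icc 0 1)
    · exact fun t ht => ((hderiv t ht).continuousAt).continuousWithinAt
    · intro t ht
      rw [interior_Icc] at ht
      have ht' : t ∈ Set.Icc (0:ℝ) 1 := ⟨le_of_lt ht.1, le_of_lt ht.2⟩
      rw [(hderiv t ht').deriv]
      have hmγ : m - γ t = (-t) • (x - m) := by rw [hγ]; module
      have hval : ((fderiv ℝ (fderiv ℝ g) (γ t)).flip (m - γ t)) (x - m)
          = -t * (fderiv ℝ (fderiv ℝ g) (γ t) (x - m) (x - m)) := by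
        rw [ContinuousLinearMap.flip_apply, hmγ, map_smul, smul_eq_mul]
      rw [hval, bilin_eval hU hg (hmem t ht')]
      have hq : QuadForm (Hess g (γ t)) (x - m) < 0 :=
        hneg (γ t) (hmem t ht') (x - m) (sub_ne_zero.mpr hxm)
      have hQ : (∑ i, ∑ j, (x - m) i * Hess g (γ t) i j * (x - m) j)
          = QuadForm (Hess g (γ t)) (x - m) := rfl
      rw [hQ]
      nlinarith [ht.1, hq]
  refine ⟨part1, part2, ?_⟩
  intro x hx hxm
  have h := part2 x hx hxm (Set.mem_Icc.mpr ⟨le_rfl, zero_le_one⟩)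
    (Set.mem_Icc.mpr ⟨zero_le_one, le_rfl⟩) zero_lt_one
  simpa using h
end

section
/- Let U ⊆ ℝⁿ be open, let g, ψ : U → ℝ be continuously differentiable, let m ∈ ℝⁿ and s ∈ ℝ, and set g_s := g + sψ and h_s(x) := ⟨x, ∇g_s(x)⟩ − g_s(x). Then: (i) for every x ∈ U, exp( −s(⟨x, ∇ψ(x)⟩ − ψ(x)) ) · exp( s⟨m, ∇ψ(x)⟩ ) · exp( ⟨m, ∇g(x)⟩ − h₀(x) ) = exp( ⟨m, ∇g_s(x)⟩ − h_s(x) ); and (ii) with the operator (X_ψ f)(x,θ) := −Σ_k (∂ψ/∂xᵏ)(x)(∂f/∂θ_k)(x,θ) on U × ℝⁿ and w^m(x,θ) := e^{⟨m, ∇g(x)⟩ + i⟨m,θ⟩}, the series Σ_{k≥0} ((is)ᵏ/k!) (X_ψᵏ w^m)(x,θ) converges absolutely to e^{s⟨m, ∇ψ(x)⟩} w^m(x,θ) for every (x,θ) ∈ U × ℝⁿ. -/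
/-- The Hamiltonian vector field of `ψ ∘ pr₁` with respect to `ω = Σ dxʲ∧dθ_j`,
acting as a first-order differential operator on functions on `U × ℝⁿ`:
`(X_ψ f)(x,θ) = − Σ_k (∂ψ/∂xᵏ)(x) (∂f/∂θ_k)(x,θ)`. -/
noncomputable def Xop {n : ℕ} (ψ : (Fin n → ℝ) → ℝ)
    (f : (Fin n → ℝ) → (Fin n → ℝ) → ℂ) : (Fin n → ℝ) → (Fin n → ℝ) → ℂ :=
  fun x θ => -∑ k, (fderiv ℝ ψ x (Pi.single k 1) : ℂ) *
    fderiv ℝ (fun θ' => f x θ') θ (Pi.single k 1)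

/-- The monomial `w^m(x,θ) = e^{⟨m,∇g(x)⟩ + i⟨m,θ⟩}`. -/
noncomputable def wmon {n : ℕ} (g : (Fin n → ℝ) → ℝ) (m : Fin n → ℝ) :
    (Fin n → ℝ) → (Fin n → ℝ) → ℂ :=
  fun x θ => Complex.exp (((fderiv ℝ g x m : ℝ) : ℂ) +
    Complex.I * ∑ i, ((m i : ℂ) * (θ i : ℂ)))

open Complex in
lemma hasFDerivAt_wmon {n : ℕ} (g : (Fin n → ℝ) → ℝ) (m : Fin n → ℝ)
    (x θ : Fin n → ℝ) :
    HasFDerivAt (fun θ' => wmon g m x θ')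
      (wmon g m x θ • (∑ i : Fin n, (Complex.I * (m i : ℂ)) •
        (Complex.ofRealCLM.comp (ContinuousLinearMap.proj i)))) θ := by
  have h1 : ∀ i : Fin n, HasFDerivAt (fun θ' : Fin n → ℝ => (Complex.I * (m i : ℂ)) * ((θ' i : ℝ) : ℂ))
      ((Complex.I * (m i : ℂ)) • (Complex.ofRealCLM.comp (ContinuousLinearMap.proj i))) θ := by
    intro i
    exact (Complex.ofRealCLM.hasFDerivAt.comp θ
      (ContinuousLinearMap.proj i).hasFDerivAt).const_mul _
  have hsum : HasFDerivAt (fun θ' : Fin n → ℝ =>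
      ∑ i : Fin n, (Complex.I * (m i : ℂ)) * ((θ' i : ℝ) : ℂ))
      (∑ i : Fin n, (Complex.I * (m i : ℂ)) •
        (Complex.ofRealCLM.comp (ContinuousLinearMap.proj i))) θ :=
    HasFDerivAt.fun_sum (fun i _ => h1 i)
  have haff := (hsum.const_add (((fderiv ℝ g x m : ℝ) : ℂ)))
  have := haff.cexp
  have heq : (fun θ' : Fin n → ℝ => Complex.exp ((((fderiv ℝ g x m : ℝ) : ℂ)) +
      ∑ i : Fin n, (Complex.I * (m i : ℂ)) * ((θ' i : ℝ) : ℂ))) = fun θ' => wmon g m x θ' := by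
    funext θ'
    simp only [wmon, Finset.mul_sum]
    ring_nf
  rw [heq] at this
  convert this using 2
  · rfl
  · rfl
  · rfl
  simp only [wmon, Finset.mul_sum]
  ring_nf

lemma fderiv_wmon_single {n : ℕ} (g : (Fin n → ℝ) → ℝ) (m : Fin n → ℝ)
    (x θ : Fin n → ℝ) (k : Fin n) :
    fderiv ℝ (fun θ' => wmon g m x θ') θ (Pi.single k 1) =
      Complex.I * (m k : ℂ) * wmon g m x θ := by
  rw [(hasFDerivAt_wmon g m x θ).fderiv]
  simp only [ContinuousLinearMap.smul_apply, ContinuousLinearMap.sum_apply,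
    ContinuousLinearMap.smul_apply, ContinuousLinearMap.comp_apply,
    ContinuousLinearMap.proj_apply, Complex.ofRealCLM_apply]
  rw [Finset.sum_eq_single k]
  · simp [Pi.single_eq_same]; ring
  · intro i _ hik
    simp [Pi.single_eq_of_ne hik]
  · simp

lemma fderiv_apply_eq_sum {n : ℕ} (ψ : (Fin n → ℝ) → ℝ) (x m : Fin n → ℝ) :
    fderiv ℝ ψ x m = ∑ k, fderiv ℝ ψ x (Pi.single k 1) * m k := by
  have := LinearMap.pi_apply_eq_sum_univ ((fderiv ℝ ψ x) : (Fin n → ℝ) →ₗ[ℝ] ℝ) m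
  simp only [ContinuousLinearMap.coe_coe] at this
  rw [this]
  refine Finset.sum_congr rfl fun k _ => ?_
  have : (fun j => if k = j then (1:ℝ) else 0) = Pi.single k 1 := by
    funext j
    by_cases h : k = j
    · subst h; simp
    · simp [Pi.single_eq_of_ne (Ne.symm h), h]
  rw [this, smul_eq_mul, mul_comm]

lemma Xop_iterate_wmon {n : ℕ} (ψ g : (Fin n → ℝ) → ℝ) (m : Fin n → ℝ)
    (k : ℕ) (x θ : Fin n → ℝ) :
    ((Xop ψ)^[k] (wmon g m)) x θ =
      (-Complex.I * (fderiv ℝ ψ x m : ℝ)) ^ k * wmon g m x θ := by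
  induction k generalizing θ with
  | zero => simp
  | succ k ih =>
    rw [Function.iterate_succ_apply']
    have hfun : (fun θ' => ((Xop ψ)^[k] (wmon g m)) x θ') =
        fun θ' => (-Complex.I * (fderiv ℝ ψ x m : ℝ)) ^ k * wmon g m x θ' :=
      funext fun θ' => ih θ'
    have hconst : ∀ j : Fin n,
        fderiv ℝ (fun θ' => ((Xop ψ)^[k] (wmon g m)) x θ') θ (Pi.single j 1) =
        (-Complex.I * (fderiv ℝ ψ x m : ℝ)) ^ k * (Complex.I * (m j : ℂ) * wmon g m x θ) := by
      intro j
      rw [hfun]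
      rw [((hasFDerivAt_wmon g m x θ).const_mul
        ((-Complex.I * (fderiv ℝ ψ x m : ℝ)) ^ k)).fderiv]
      rw [ContinuousLinearMap.smul_apply, smul_eq_mul,
        ← (hasFDerivAt_wmon g m x θ).fderiv, fderiv_wmon_single]
    simp only [Xop]
    rw [Finset.sum_congr rfl (fun j _ => by rw [hconst j])]
    have hsum : ∑ j : Fin n, ((fderiv ℝ ψ x (Pi.single j 1) : ℝ) : ℂ) *
        ((-Complex.I * (fderiv ℝ ψ x m : ℝ)) ^ k * (Complex.I * (m j : ℂ) * wmon g m x θ)) =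
        ((-Complex.I * (fderiv ℝ ψ x m : ℝ)) ^ k * (Complex.I * wmon g m x θ)) *
          ∑ j : Fin n, ((fderiv ℝ ψ x (Pi.single j 1) : ℝ) : ℂ) * (m j : ℂ) := by
      rw [Finset.mul_sum]
      exact Finset.sum_congr rfl fun j _ => by ring
    rw [hsum]
    have hl : ∑ j : Fin n, ((fderiv ℝ ψ x (Pi.single j 1) : ℝ) : ℂ) * (m j : ℂ) =
        ((fderiv ℝ ψ x m : ℝ) : ℂ) := by
      rw [fderiv_apply_eq_sum ψ x m]
      push_cast
      rfl
    rw [hl, pow_succ]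
    ring

theorem stmt_16 (n : ℕ) (U : Set (Fin n → ℝ)) (hU : IsOpen U)
    (g ψ : (Fin n → ℝ) → ℝ)
    (hg : ContDiffOn ℝ 1 g U) (hψ : ContDiffOn ℝ 1 ψ U)
    (m : Fin n → ℝ) (s : ℝ)
    (gs : (Fin n → ℝ) → ℝ) (hgs : ∀ y, gs y = g y + s * ψ y)
    (hs : (Fin n → ℝ) → ℝ) (hhs : ∀ x, hs x = fderiv ℝ gs x x - gs x)
    (h₀ : (Fin n → ℝ) → ℝ) (hh₀ : ∀ x, h₀ x = fderiv ℝ g x x - g x) :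
    (∀ x ∈ U,
      Real.exp (-(s * (fderiv ℝ ψ x x - ψ x))) * Real.exp (s * fderiv ℝ ψ x m) *
          Real.exp (fderiv ℝ g x m - h₀ x) =
        Real.exp (fderiv ℝ gs x m - hs x)) ∧
    (∀ x ∈ U, ∀ θ : Fin n → ℝ,
      Summable (fun k : ℕ =>
        ‖((Complex.I * (s : ℂ)) ^ k / (Nat.factorial k : ℂ)) *
          ((Xop ψ)^[k] (wmon g m)) x θ‖) ∧
      ∑' k : ℕ, ((Complex.I * (s : ℂ)) ^ k / (Nat.factorial k : ℂ)) *
          ((Xop ψ)^[k] (wmon g m)) x θ =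
        (Real.exp (s * fderiv ℝ ψ x m) : ℂ) * wmon g m x θ) := by
  constructor
  · intro x hx
    have hxn : U ∈ nhds x := hU.mem_nhds hx
    have hdg : DifferentiableAt ℝ g x :=
      ((hg.differentiableOn one_ne_zero).differentiableAt hxn)
    have hdψ : DifferentiableAt ℝ ψ x :=
      ((hψ.differentiableOn one_ne_zero).differentiableAt hxn)
    have hgsfun : gs = fun y => g y + s * ψ y := funext hgs
    have hfgs : fderiv ℝ gs x = fderiv ℝ g x + s • fderiv ℝ ψ x := by
      rw [hgsfun, fderiv_fun_add hdg (hdψ.const_mul s), fderiv_const_mul hdψ]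
    have e1 : (fderiv ℝ gs x) m = fderiv ℝ g x m + s * fderiv ℝ ψ x m := by
      rw [hfgs]; simp
    have e2 : (fderiv ℝ gs x) x = fderiv ℝ g x x + s * fderiv ℝ ψ x x := by
      rw [hfgs]; simp
    rw [← Real.exp_add, ← Real.exp_add]
    congr 1
    rw [hhs, hh₀, e1, e2, hgs]
    ring
  · intro x hx θ
    have hiter : ∀ k : ℕ, ((Xop ψ)^[k] (wmon g m)) x θ =
        (-Complex.I * (fderiv ℝ ψ x m : ℝ)) ^ k * wmon g m x θ :=
      fun k => Xop_iterate_wmon ψ g m k x θ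
    have hterm : ∀ k : ℕ, ((Complex.I * (s : ℂ)) ^ k / (Nat.factorial k : ℂ)) *
        ((Xop ψ)^[k] (wmon g m)) x θ =
        (((s * fderiv ℝ ψ x m : ℝ) : ℂ)) ^ k / (Nat.factorial k : ℂ) * wmon g m x θ := by
      intro k
      rw [hiter k]
      have : (Complex.I * (s : ℂ)) ^ k * (-Complex.I * (fderiv ℝ ψ x m : ℝ)) ^ k =
          (((s * fderiv ℝ ψ x m : ℝ) : ℂ)) ^ k := by
        rw [← mul_pow]
        congr 1
        push_cast
        have : Complex.I * (s : ℂ) * (-Complex.I * (fderiv ℝ ψ x m : ℝ)) =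
            -(Complex.I * Complex.I) * ((s : ℂ) * (fderiv ℝ ψ x m : ℝ)) := by ring
        rw [this, Complex.I_mul_I]
        ring
      rw [show (Complex.I * (s : ℂ)) ^ k / (Nat.factorial k : ℂ) *
          ((-Complex.I * ((fderiv ℝ ψ x m : ℝ) : ℂ)) ^ k * wmon g m x θ) =
          ((Complex.I * (s : ℂ)) ^ k * (-Complex.I * ((fderiv ℝ ψ x m : ℝ) : ℂ)) ^ k) *
            wmon g m x θ / (Nat.factorial k : ℂ) from by ring, this]
      ring
    constructor
    · apply Summable.congr
        ((Real.summable_pow_div_factorial |s * fderiv ℝ ψ x m|).mul_right ‖wmon g m x θ‖)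
      intro k
      simp [hterm k, norm_mul, norm_div, Complex.norm_real, Real.norm_eq_abs, abs_pow]
    · rw [tsum_congr hterm, tsum_mul_right]
      congr 1
      rw [Complex.ofReal_exp, Complex.exp_eq_exp_ℂ, NormedSpace.exp_eq_tsum_div]
end
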